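/- arXiv:2408.07827 — 5 statements merged into one kernel-verified Lean document; each statement's English description precedes it below -/
import Mathlib

section
/- Let λ₁,…,λₙ > 0, α₁,…,αₙ > 0 with α := max αⱼ, and let β₁,…,βₙ > 0 with β := max βⱼ. Suppose α(1 + 2π β log 2) < 1. With γ = log(1/2) and g = sin, the function h(x) := Σⱼ λⱼ (x + αⱼ x sin(−2π βⱼ γ log x)) satisfies λ(1 − α(1 − 2πβγ))|x − y| ≤ |h(x) − h(y)| for all x, y > 0, where λ = Σⱼ λⱼ; in particular h is bi-Lipschitz on (0,∞). -/
open Real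

/-- `h = ∑ⱼ λⱼ g_{αⱼ, −2πβⱼ log(1/2)}` where `g_{α,β}(x) = x + α x sin(β log x)`. -/
noncomputable def hfun (n : ℕ) (lam alpha beta : Fin n → ℝ) (x : ℝ) : ℝ :=
  ∑ j, lam j * (x + alpha j * x *
    Real.sin (-(2 * Real.pi * beta j * Real.log (1/2)) * Real.log x))

/-! The map `x ↦ λ x + ℓ x` is bi-Lipschitz as soon as the perturbation `ℓ` is `K`-Lipschitz
with `K < λ`. Here `ℓ = ∑ⱼ λⱼ αⱼ x sin(cⱼ log x)` with `cⱼ = 2πβⱼ log 2`, and the derivative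
`sin(c log x) + c cos(c log x)` of `x sin(c log x)` is bounded by `1 + |c|`. -/

lemma hasDerivAt_mul_sin_mul_log (c : ℝ) {x : ℝ} (hx : 0 < x) :
    HasDerivAt (fun x => x * sin (c * log x)) (sin (c * log x) + c * cos (c * log x)) x := by
  have hsin : HasDerivAt (fun x => sin (c * log x)) (cos (c * log x) * (c * x⁻¹)) x :=
    (hasDerivAt_sin _).comp x ((hasDerivAt_log hx.ne').const_mul c)
  refine ((hasDerivAt_id' x).mul hsin).congr_deriv ?_
  field_simp

lemma abs_mul_sin_mul_log_sub_le (c : ℝ) {x y : ℝ} (hx : 0 < x) (hy : 0 < y) :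
    |x * sin (c * log x) - y * sin (c * log y)| ≤ (1 + |c|) * |x - y| := by
  have hderiv_le (t : ℝ) : ‖sin t + c * cos t‖ ≤ 1 + |c| := by
    calc ‖sin t + c * cos t‖ ≤ |sin t| + |c| * |cos t| := by
          rw [norm_eq_abs, ← abs_mul]; exact abs_add_le _ _
      _ ≤ 1 + |c| * 1 := by gcongr <;> first | exact abs_sin_le_one t | exact abs_cos_le_one t
      _ = 1 + |c| := by rw [mul_one]
  simpa only [norm_eq_abs] using (convex_Ioi (0 : ℝ)).norm_image_sub_le_of_norm_hasDerivWithin_le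
    (fun z hz => (hasDerivAt_mul_sin_mul_log c hz).hasDerivWithinAt)
    (fun z _ => hderiv_le _) hy hx

lemma abs_bounds_of_abs_sub_mul_le {a d L K : ℝ} (hL : 0 ≤ L) (h : |a - L * d| ≤ K * |d|) :
    (L - K) * |d| ≤ |a| ∧ |a| ≤ (L + K) * |d| := by
  have hLd : |L * d| = L * |d| := by rw [abs_mul, abs_of_nonneg hL]
  constructor
  · linarith [abs_sub_abs_le_abs_sub (L * d) a, abs_sub_comm (L * d) a]
  · linarith [abs_sub_abs_le_abs_sub a (L * d)]

lemma hfun_sub_eq (n : ℕ) (lam alpha beta : Fin n → ℝ) (x y : ℝ) :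
    hfun n lam alpha beta x - hfun n lam alpha beta y - (∑ j, lam j) * (x - y) =
      ∑ j, lam j * alpha j * (x * sin (2 * π * beta j * log 2 * log x) -
        y * sin (2 * π * beta j * log 2 * log y)) := by
  simp only [hfun, one_div, log_inv, Finset.sum_mul, ← Finset.sum_sub_distrib]
  exact Finset.sum_congr rfl fun j _ => by ring_nf

lemma abs_hfun_sub_sub_le {n : ℕ} {lam alpha beta : Fin n → ℝ} {α β : ℝ}
    (hlam : ∀ j, 0 ≤ lam j) (halpha : ∀ j, 0 ≤ alpha j) (hbeta : ∀ j, 0 ≤ beta j)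
    (hαub : ∀ j, alpha j ≤ α) (hβub : ∀ j, beta j ≤ β) {x y : ℝ} (hx : 0 < x) (hy : 0 < y) :
    |hfun n lam alpha beta x - hfun n lam alpha beta y - (∑ j, lam j) * (x - y)| ≤
      (∑ j, lam j) * (α * (1 + 2 * π * β * log 2)) * |x - y| := by
  rw [hfun_sub_eq, Finset.sum_mul, Finset.sum_mul]
  refine (Finset.abs_sum_le_sum_abs _ _).trans (Finset.sum_le_sum fun j _ => ?_)
  have hc : |2 * π * beta j * log 2| ≤ 2 * π * β * log 2 := by
    rw [abs_of_nonneg (by have := hbeta j; positivity)]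
    gcongr; exact hβub j
  have hα : 0 ≤ α := (halpha j).trans (hαub j)
  calc |lam j * alpha j * (x * sin (2 * π * beta j * log 2 * log x) -
          y * sin (2 * π * beta j * log 2 * log y))|
      ≤ lam j * alpha j * ((1 + |2 * π * beta j * log 2|) * |x - y|) := by
        rw [abs_mul, abs_of_nonneg (mul_nonneg (hlam j) (halpha j))]
        gcongr
        · exact mul_nonneg (hlam j) (halpha j)
        · exact abs_mul_sin_mul_log_sub_le _ hx hy
    _ ≤ lam j * α * ((1 + 2 * π * β * log 2) * |x - y|) := by
        have := hlam j
        gcongr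
        exact hαub j
    _ = lam j * (α * (1 + 2 * π * β * log 2)) * |x - y| := by ring

theorem stmt1_general (n : ℕ) (hn : 0 < n) (lam alpha beta : Fin n → ℝ)
    (hlam : ∀ j, 0 < lam j) (halpha : ∀ j, 0 < alpha j) (hbeta : ∀ j, 0 < beta j)
    (α β : ℝ) (hαub : ∀ j, alpha j ≤ α)
    (hβub : ∀ j, beta j ≤ β)
    (hsmall : α * (1 + 2 * π * β * Real.log 2) < 1) :
    (∀ x y : ℝ, 0 < x → 0 < y →
      (∑ j, lam j) * (1 - α * (1 - 2 * π * β * Real.log (1/2))) * |x - y| ≤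
        |hfun n lam alpha beta x - hfun n lam alpha beta y|) ∧
    ∃ a b : ℝ, 0 < b ∧ b ≤ a ∧ ∀ x y : ℝ, 0 < x → 0 < y →
      b * |x - y| ≤ |hfun n lam alpha beta x - hfun n lam alpha beta y| ∧
      |hfun n lam alpha beta x - hfun n lam alpha beta y| ≤ a * |x - y| := by
  let j₀ : Fin n := ⟨0, hn⟩
  set L := ∑ j, lam j
  set K := L * (α * (1 + 2 * π * β * log 2))
  have hL : 0 < L := Finset.sum_pos (fun j _ => hlam j) ⟨j₀, Finset.mem_univ _⟩
  have hK : 0 ≤ K := by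
    have := (halpha j₀).trans_le (hαub j₀)
    have := (hbeta j₀).trans_le (hβub j₀)
    positivity
  have hKL : K < L := mul_lt_of_lt_one_right hL hsmall
  have hbounds (x y : ℝ) (hx : 0 < x) (hy : 0 < y) :=
    abs_bounds_of_abs_sub_mul_le hL.le (abs_hfun_sub_sub_le (fun j => (hlam j).le)
      (fun j => (halpha j).le) (fun j => (hbeta j).le) hαub hβub hx hy)
  have hLK : L * (1 - α * (1 - 2 * π * β * log (1 / 2))) = L - K := by
    rw [one_div, log_inv]; ring
  exact ⟨fun x y hx hy => hLK ▸ (hbounds x y hx hy).1,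
    L + K, L - K, by linarith, by linarith, hbounds⟩

theorem stmt1 (n : ℕ) (hn : 0 < n) (lam alpha beta : Fin n → ℝ)
    (hlam : ∀ j, 0 < lam j) (halpha : ∀ j, 0 < alpha j) (hbeta : ∀ j, 0 < beta j)
    (α β : ℝ) (hαub : ∀ j, alpha j ≤ α) (hαmem : ∃ j, alpha j = α)
    (hβub : ∀ j, beta j ≤ β) (hβmem : ∃ j, beta j = β)
    (hsmall : α * (1 + 2 * π * β * Real.log 2) < 1) :
    (∀ x y : ℝ, 0 < x → 0 < y →
      (∑ j, lam j) * (1 - α * (1 - 2 * π * β * Real.log (1/2))) * |x - y| ≤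
        |hfun n lam alpha beta x - hfun n lam alpha beta y|) ∧
    ∃ a b : ℝ, 0 < b ∧ b ≤ a ∧ ∀ x y : ℝ, 0 < x → 0 < y →
      b * |x - y| ≤ |hfun n lam alpha beta x - hfun n lam alpha beta y| ∧
      |hfun n lam alpha beta x - hfun n lam alpha beta y| ≤ a * |x - y| :=
  stmt1_general n hn lam alpha beta hlam halpha hbeta α β hαub hβub hsmall
end

section
/- Let β₁, β₂ > 0 with β₁, β₂, and the ratio β₁/β₂ such that β₁ and β₂ are ℚ-linearly independent. Then for every real β ≠ 0, sup_{x > 0} x·|sin(β₁ log x) − β sin(β₂ log x)| = ∞. In particular, limsup_{y → ∞} |sin(β₁ y) − β sin(β₂ y)| > 0. -/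
/-!
Along `y = 2πn/β₂` the second sine vanishes and the function reduces to `sin (n α)` with
`α = 2π β₁/β₂`, where `sin α ≠ 0` because `β₁/β₂` is irrational. The sequence `sin (n α)`
does not tend to `0`: by the addition formula
`sin ((n+1) α) = sin (n α) cos α + cos (n α) sin α` the cosines would tend to `0` as well,
contradicting `sin² + cos² = 1`. Hence `|sin (β₁ y) - β sin (β₂ y)| ≥ ε` for arbitrarily
large `y`, which gives both claims with `x = eʸ`.
-/

open Real Filter Topology

theorem irrational_div_of_linearIndependent_pair {a b : ℝ}
    (hab : LinearIndependent ℚ ![a, b]) : Irrational (a / b) := by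
  rintro ⟨q, hq⟩
  have hb : b ≠ 0 := by simpa using hab.ne_zero 1
  have ha : a = q * b := by rw [hq, div_mul_cancel₀ a hb]
  have hcomb : (1 : ℚ) • a + (-q) • b = 0 := by
    rw [Rat.smul_def, Rat.smul_def, ha]
    push_cast
    ring
  exact one_ne_zero (LinearIndependent.pair_iff.1 hab _ _ hcomb).1

theorem Irrational.sin_two_pi_mul_ne_zero {θ : ℝ} (hθ : Irrational θ) :
    sin (2 * π * θ) ≠ 0 := by
  rw [Ne, sin_eq_zero_iff]
  rintro ⟨n, hn⟩
  exact hθ ⟨n / 2, by push_cast; field_simp at hn ⊢; linarith⟩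

theorem not_tendsto_sin_nat_mul_zero {α : ℝ} (hα : sin α ≠ 0) :
    ¬ Tendsto (fun n : ℕ => sin (n * α)) atTop (𝓝 0) := by
  intro hsin
  have hsin_succ : Tendsto (fun n : ℕ => sin ((n + 1 : ℕ) * α)) atTop (𝓝 0) :=
    (tendsto_add_atTop_iff_nat 1).2 hsin
  have hcos : Tendsto (fun n : ℕ => cos (n * α)) atTop (𝓝 0) := by
    have := (hsin_succ.sub (hsin.mul_const (cos α))).div_const (sin α)
    rw [zero_mul, sub_zero, zero_div] at this
    refine this.congr fun n => ?_
    rw [Nat.cast_succ, add_one_mul, sin_add]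
    field_simp
    ring
  have hone : Tendsto (fun _ : ℕ => (1 : ℝ)) atTop (𝓝 0) := by
    simpa only [sin_sq_add_cos_sq, zero_pow two_ne_zero, add_zero] using
      (hsin.pow 2).add (hcos.pow 2)
  exact one_ne_zero (tendsto_const_nhds_iff.1 hone)

theorem not_tendsto_sin_sub_mul_sin {a b : ℝ} (hb : 0 < b) (hab : Irrational (a / b)) (β : ℝ) :
    ¬ Tendsto (fun y => sin (a * y) - β * sin (b * y)) atTop (𝓝 0) := by
  intro h
  have hy : Tendsto (fun n : ℕ => (n : ℝ) * (2 * π / b)) atTop atTop :=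
    tendsto_natCast_atTop_atTop.atTop_mul_const (by positivity)
  refine not_tendsto_sin_nat_mul_zero hab.sin_two_pi_mul_ne_zero ((h.comp hy).congr fun n => ?_)
  have hb_mul : b * (n * (2 * π / b)) = (2 * n : ℕ) * π := by push_cast; field_simp
  have ha_mul : a * (n * (2 * π / b)) = n * (2 * π * (a / b)) := by field_simp
  simp only [Function.comp_apply, hb_mul, ha_mul, sin_nat_mul_pi, mul_zero, sub_zero]

theorem exists_frequently_le_abs_of_not_tendsto_zero {ι : Type*} {l : Filter ι} {f : ι → ℝ}
    (h : ¬ Tendsto f l (𝓝 0)) : ∃ ε > 0, ∃ᶠ i in l, ε ≤ |f i| := by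
  simpa [Metric.tendsto_nhds, Filter.not_eventually] using h

theorem exists_lt_exp_mul_of_frequently_le {g : ℝ → ℝ} {ε : ℝ} (hε : 0 < ε)
    (hg : ∃ᶠ y in atTop, ε ≤ g y) (M : ℝ) : ∃ y, M < exp y * g y := by
  obtain ⟨y, hy, hgy⟩ := hg.forall_exists_of_atTop (|M| / ε)
  refine ⟨y, ?_⟩
  have hexp : |M| < exp y * ε := by
    rw [div_le_iff₀ hε] at hy
    nlinarith [add_one_le_exp y]
  calc M ≤ |M| := le_abs_self M
    _ < exp y * ε := hexp
    _ ≤ exp y * g y := by gcongr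

theorem abs_sin_sub_mul_sin_le (a b β y : ℝ) :
    |sin (a * y) - β * sin (b * y)| ≤ 1 + |β| :=
  calc |sin (a * y) - β * sin (b * y)| ≤ |sin (a * y)| + |β| * |sin (b * y)| := by
        rw [← abs_mul]; exact abs_sub _ _
    _ ≤ 1 + |β| * 1 := by gcongr <;> exact abs_sin_le_one _
    _ = 1 + |β| := by rw [mul_one]

theorem stmt3_general (β₁ β₂ : ℝ) (h2 : 0 < β₂)
    (hind : LinearIndependent ℚ ![β₁, β₂]) :
    ∀ β : ℝ, β ≠ 0 →
      (∀ M : ℝ, ∃ x : ℝ, 0 < x ∧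
        M < x * |Real.sin (β₁ * Real.log x) - β * Real.sin (β₂ * Real.log x)|) ∧
      0 < Filter.limsup
        (fun y : ℝ => |Real.sin (β₁ * y) - β * Real.sin (β₂ * y)|) Filter.atTop := by
  intro β _
  obtain ⟨ε, hε, hfreq⟩ := exists_frequently_le_abs_of_not_tendsto_zero
    (not_tendsto_sin_sub_mul_sin h2 (irrational_div_of_linearIndependent_pair hind) β)
  refine ⟨fun M => ?_, hε.trans_le (le_limsup_of_frequently_le hfreq ?_)⟩
  · obtain ⟨y, hy⟩ := exists_lt_exp_mul_of_frequently_le hε hfreq M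
    exact ⟨exp y, exp_pos y, by rwa [log_exp]⟩
  · exact isBoundedUnder_of ⟨1 + |β|, abs_sin_sub_mul_sin_le β₁ β₂ β⟩

theorem stmt3 (β₁ β₂ : ℝ) (h1 : 0 < β₁) (h2 : 0 < β₂)
    (hind : LinearIndependent ℚ ![β₁, β₂]) :
    ∀ β : ℝ, β ≠ 0 →
      (∀ M : ℝ, ∃ x : ℝ, 0 < x ∧
        M < x * |Real.sin (β₁ * Real.log x) - β * Real.sin (β₂ * Real.log x)|) ∧
      0 < Filter.limsup
        (fun y : ℝ => |Real.sin (β₁ * y) - β * Real.sin (β₂ * y)|) Filter.atTop :=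
  stmt3_general β₁ β₂ h2 hind
end

section
/- Let φ : [0,∞) → ℝ be a Lipschitz map with φ(0) = 0, and define Ω_φ : c₀₀ → ℓ₂ by Ω_φ(x) = Σₙ xₙ φ(−log(|xₙ|/‖x‖₂)) eₙ for x ≠ 0 and Ω_φ(0) = 0. Suppose there exists a constant C such that for all N, M ≥ 1, |φ(log √M) + φ(log √N) − φ(log √(NM))| ≤ C. Then sup_{a,b > 0} |φ(a+b) − φ(a) − φ(b)| < ∞, and consequently there exists c ∈ ℝ with sup_{t>0}|φ(t) − ct| < ∞. -/
open Real

/-- The ℓ₂ norm of a finitely supported sequence. -/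
noncomputable def l2 (x : ℕ →₀ ℝ) : ℝ :=
  Real.sqrt (∑ n ∈ x.support, (x n) ^ 2)

/-- The Kalton–Peck type quasi-linear map `Ω_φ(x) = ∑ₙ xₙ φ(log(‖x‖₂/|xₙ|)) eₙ` on `c₀₀`. -/
noncomputable def Omega (φ : ℝ → ℝ) (x : ℕ →₀ ℝ) : ℕ →₀ ℝ :=
  Finsupp.onFinset x.support
    (fun n => x n * φ (Real.log (l2 x / |x n|)))
    (fun n h => Finsupp.mem_support_iff.2 (left_ne_zero_of_mul h))

/-!
The integers `M ≥ 1` are multiplicatively `2`-dense in `[1, ∞)`, so the numbers `log √M`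
are `(log 2 / 2)`-dense in `[0, ∞)`; as `φ` is Lipschitz, the hypothesis on `log √M`, `log √N`
therefore gives `|φ(a + b) - φ a - φ b| ≤ D` for all `a, b ≥ 0`. On the naturals, `φ n + D`
and `D - φ n` are then subadditive, and Fekete's lemma applied to both yields `c` with
`|φ n - c n| ≤ D`; the Lipschitz bound extends this from `n = ⌈t⌉₊` to every `t > 0`.
-/

open Set Filter Topology
open scoped NNReal

lemma exists_nat_abs_log_sqrt_sub_le {a : ℝ} (ha : 0 ≤ a) :
    ∃ M : ℕ, 1 ≤ M ∧ |log √M - a| ≤ log 2 / 2 := by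
  have hx : 1 ≤ exp (2 * a) := one_le_exp (by positivity)
  refine ⟨⌈exp (2 * a)⌉₊, Nat.one_le_ceil_iff.2 (exp_pos _), ?_⟩
  have hlow : exp (2 * a) ≤ ⌈exp (2 * a)⌉₊ := Nat.le_ceil _
  have hup : (⌈exp (2 * a)⌉₊ : ℝ) ≤ 2 * exp (2 * a) :=
    (Nat.ceil_lt_two_mul (by linarith)).le
  have hlog_low : 2 * a ≤ log ⌈exp (2 * a)⌉₊ := by
    simpa using log_le_log (exp_pos _) hlow
  have hlog_up : log ⌈exp (2 * a)⌉₊ ≤ log 2 + 2 * a := by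
    simpa [log_mul, (exp_pos _).ne'] using log_le_log (by positivity) hup
  rw [log_sqrt (Nat.cast_nonneg _), abs_le]
  constructor <;> linarith

lemma abs_add_sub_le_of_approx {φ : ℝ → ℝ} {K : ℝ≥0} (hφ : LipschitzOnWith K φ (Ici 0))
    {a b p q δ C : ℝ} (ha : 0 ≤ a) (hb : 0 ≤ b) (hp : 0 ≤ p) (hq : 0 ≤ q)
    (hpa : |p - a| ≤ δ) (hqb : |q - b| ≤ δ) (hpq : |φ p + φ q - φ (p + q)| ≤ C) :
    |φ (a + b) - φ a - φ b| ≤ C + 4 * K * δ := by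
  have lip : ∀ x ≥ 0, ∀ y ≥ 0, |φ x - φ y| ≤ K * |x - y| := fun x hx y hy => by
    simpa only [Real.dist_eq] using hφ.dist_le_mul x hx y hy
  have hsum : |(a + b) - (p + q)| ≤ 2 * δ :=
    calc |(a + b) - (p + q)| = |(p - a) + (q - b)| := by rw [← abs_neg]; ring_nf
      _ ≤ |p - a| + |q - b| := abs_add_le _ _
      _ ≤ 2 * δ := by linarith
  have e₁ := (lip _ (add_nonneg ha hb) _ (add_nonneg hp hq)).trans
    (mul_le_mul_of_nonneg_left hsum K.2)
  have e₂ := (lip p hp a ha).trans (mul_le_mul_of_nonneg_left hpa K.2)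
  have e₃ := (lip q hq b hb).trans (mul_le_mul_of_nonneg_left hqb K.2)
  rw [abs_le] at *
  constructor <;> linarith

lemma Subadditive.bddBelow_div_of_le_add {s t : ℕ → ℝ} (ht : Subadditive t)
    (hst : ∀ n, t 0 ≤ s n + t n) : BddBelow (range fun n => s n / n) := by
  refine ⟨min 0 (-t 1), ?_⟩
  rintro _ ⟨n, rfl⟩
  rcases Nat.eq_zero_or_pos n with rfl | hn
  · simp
  · have hn' : (0 : ℝ) < n := Nat.cast_pos.2 hn
    have := ht.apply_mul_add_le n 1 0
    simp only [mul_one, add_zero] at this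
    refine (min_le_right _ _).trans ?_
    rw [le_div_iff₀ hn']
    linarith [hst n]

lemma exists_abs_sub_mul_le_of_quasiAdditive {u : ℕ → ℝ} {D : ℝ}
    (hu : ∀ m n, |u (m + n) - u m - u n| ≤ D) : ∃ c, ∀ n, |u n - c * n| ≤ D := by
  have hs : Subadditive fun n => u n + D := fun m n => by
    linarith [(abs_le.1 (hu m n)).2]
  have ht : Subadditive fun n => D - u n := fun m n => by
    linarith [(abs_le.1 (hu m n)).1]
  have hu0 : |u 0| ≤ D := by simpa using hu 0 0
  have hs_bdd := Subadditive.bddBelow_div_of_le_add (s := fun n => u n + D) ht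
    fun n => by linarith [(abs_le.1 hu0).1]
  have ht_bdd := Subadditive.bddBelow_div_of_le_add (s := fun n => D - u n) hs
    fun n => by linarith [(abs_le.1 hu0).2]
  have hlim : hs.lim + ht.lim = 0 := by
    refine tendsto_nhds_unique ((hs.tendsto_lim hs_bdd).add (ht.tendsto_lim ht_bdd)) ?_
    exact (tendsto_const_div_atTop_nhds_zero_nat (2 * D)).congr fun n => by ring
  refine ⟨hs.lim, fun n => ?_⟩
  rcases Nat.eq_zero_or_pos n with rfl | hn
  · simpa using hu0
  · have hn' : (0 : ℝ) < n := Nat.cast_pos.2 hn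
    have h₁ := hs.lim_le_div hs_bdd hn.ne'
    have h₂ := ht.lim_le_div ht_bdd hn.ne'
    rw [le_div_iff₀ hn'] at h₁ h₂
    rw [abs_le]
    constructor <;> nlinarith

lemma abs_sub_mul_le_of_nat {φ : ℝ → ℝ} {K : ℝ≥0} (hφ : LipschitzOnWith K φ (Ici 0))
    {c D : ℝ} (hnat : ∀ n : ℕ, |φ n - c * n| ≤ D) {t : ℝ} (ht : 0 ≤ t) :
    |φ t - c * t| ≤ K + D + |c| := by
  set n := ⌈t⌉₊
  have hnt : |t - n| ≤ 1 := by
    rw [abs_sub_comm, abs_of_nonneg (sub_nonneg.2 (Nat.le_ceil t))]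
    linarith [Nat.ceil_lt_add_one ht]
  have e₁ : |φ t - φ n| ≤ K := by
    have := hφ.dist_le_mul t ht n (mem_Ici.2 (Nat.cast_nonneg n))
    rw [Real.dist_eq, Real.dist_eq] at this
    exact this.trans (mul_le_of_le_one_right K.2 hnt)
  have e₃ : |c * (n - t)| ≤ |c| := by
    rw [abs_mul, abs_sub_comm]
    exact mul_le_of_le_one_right (abs_nonneg c) hnt
  calc |φ t - c * t| = |(φ t - φ n) + (φ n - c * n) + c * (n - t)| := by ring_nf
    _ ≤ |φ t - φ n| + |φ n - c * n| + |c * (n - t)| := abs_add_three _ _ _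
    _ ≤ K + D + |c| := by gcongr; exact hnat n

theorem stmt5_general (φ : ℝ → ℝ) (L : ℝ)
    (hLip : ∀ s ∈ Set.Ici (0:ℝ), ∀ t ∈ Set.Ici (0:ℝ), |φ s - φ t| ≤ L * |s - t|)
    (C : ℝ)
    (hC : ∀ N M : ℕ, 1 ≤ N → 1 ≤ M →
      |φ (Real.log (Real.sqrt M)) + φ (Real.log (Real.sqrt N)) -
        φ (Real.log (Real.sqrt ((N : ℝ) * M)))| ≤ C) :
    (∃ C' : ℝ, ∀ a b : ℝ, 0 < a → 0 < b → |φ (a + b) - φ a - φ b| ≤ C') ∧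
    ∃ c K : ℝ, ∀ t : ℝ, 0 < t → |φ t - c * t| ≤ K := by
  have hφ : LipschitzOnWith L.toNNReal φ (Ici 0) := .of_dist_le_mul fun s hs t ht => by
    simpa only [Real.dist_eq, Real.coe_toNNReal'] using (hLip s hs t ht).trans
      (mul_le_mul_of_nonneg_right (le_max_left L 0) (abs_nonneg _))
  have hadd : ∀ a b : ℝ, 0 ≤ a → 0 ≤ b →
      |φ (a + b) - φ a - φ b| ≤ C + 4 * L.toNNReal * (log 2 / 2) := by
    intro a b ha hb
    obtain ⟨N, hN, hNa⟩ := exists_nat_abs_log_sqrt_sub_le ha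
    obtain ⟨M, hM, hMb⟩ := exists_nat_abs_log_sqrt_sub_le hb
    have hM' : (1 : ℝ) ≤ M := by exact_mod_cast hM
    have hN' : (1 : ℝ) ≤ N := by exact_mod_cast hN
    have hC' := hC N M hN hM
    rw [sqrt_mul (by linarith), log_mul (by positivity) (by positivity), add_comm] at hC'
    exact abs_add_sub_le_of_approx hφ ha hb (log_nonneg (one_le_sqrt.2 hN'))
      (log_nonneg (one_le_sqrt.2 hM')) hNa hMb hC'
  refine ⟨⟨_, fun a b ha hb => hadd a b ha.le hb.le⟩, ?_⟩
  obtain ⟨c, hc⟩ := exists_abs_sub_mul_le_of_quasiAdditive (u := fun n : ℕ => φ n)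
    fun m n => by simpa only [Nat.cast_add] using hadd m n (Nat.cast_nonneg m) (Nat.cast_nonneg n)
  exact ⟨c, _, fun t ht => abs_sub_mul_le_of_nat hφ hc ht.le⟩

theorem stmt5 (φ : ℝ → ℝ) (L : ℝ) (hφ0 : φ 0 = 0)
    (hLip : ∀ s ∈ Set.Ici (0:ℝ), ∀ t ∈ Set.Ici (0:ℝ), |φ s - φ t| ≤ L * |s - t|)
    (C : ℝ)
    (hC : ∀ N M : ℕ, 1 ≤ N → 1 ≤ M →
      |φ (Real.log (Real.sqrt M)) + φ (Real.log (Real.sqrt N)) -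
        φ (Real.log (Real.sqrt ((N : ℝ) * M)))| ≤ C) :
    (∃ C' : ℝ, ∀ a b : ℝ, 0 < a → 0 < b → |φ (a + b) - φ a - φ b| ≤ C') ∧
    ∃ c K : ℝ, ∀ t : ℝ, 0 < t → |φ t - c * t| ≤ K :=
  stmt5_general φ L hLip C hC
end

section
/- Let φ : [0,∞) → ℝ be Lipschitz with φ(0) = 0. Then the map Ω_φ defined on finitely supported sequences by Ω_φ(x) = Σₙ xₙ φ(log(‖x‖₂/|xₙ|)) eₙ (with Ω_φ(0) = 0, and terms with xₙ = 0 interpreted as 0) is quasi-linear: it is homogeneous, i.e., Ω_φ(λx) = λ Ω_φ(x) for all scalars λ, and there is a constant C > 0 such that ‖Ω_φ(x+y) − Ω_φ(x) − Ω_φ(y)‖₂ ≤ C(‖x‖₂ + ‖y‖₂) for all finitely supported x, y. -/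
open Real

/-!
Write `ω_r(t) = t φ(log (r / |t|))`, so that `Ω_φ x` applies `ω_‖x‖` coordinatewise. Freezing the
radius at `r = ‖x‖ + ‖y‖` changes each of `Ω_φ x`, `Ω_φ y`, `Ω_φ (x + y)` by at most `L r`, since
`‖w‖ log (r / ‖w‖) ≤ r`. With the radius frozen the defect is computed coordinatewise, and
`|ω_r(a + b) - ω_r(a) - ω_r(b)| ≤ L (|a| + |b|)`: for `a, b ≥ 0` this is the Lipschitz bound together
with `s log (t / s) ≤ t - s`, and the general case reduces to it by the symmetries of the defect.
-/

open scoped NNReal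

lemma l2_nonneg (x : ℕ →₀ ℝ) : 0 ≤ l2 x := Real.sqrt_nonneg _

lemma l2_eq_sqrt_sum (x : ℕ →₀ ℝ) {s : Finset ℕ} (hs : x.support ⊆ s) :
    l2 x = √(∑ n ∈ s, x n ^ 2) := by
  rw [l2, Finset.sum_subset hs fun _ _ hn => by simp [Finsupp.notMem_support_iff.1 hn]]

lemma abs_apply_le_l2 (x : ℕ →₀ ℝ) (n : ℕ) : |x n| ≤ l2 x := by
  rw [l2_eq_sqrt_sum x (Finset.subset_insert n x.support), ← Real.sqrt_sq_eq_abs]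
  exact Real.sqrt_le_sqrt
    (Finset.single_le_sum (fun m _ => sq_nonneg (x m)) (Finset.mem_insert_self n _))

lemma sqrt_sum_sq_add_le {ι : Type*} (s : Finset ι) (f g : ι → ℝ) :
    √(∑ n ∈ s, (f n + g n) ^ 2) ≤ √(∑ n ∈ s, f n ^ 2) + √(∑ n ∈ s, g n ^ 2) := by
  simpa only [Real.rpow_two, sq_abs, ← Real.sqrt_eq_rpow] using
    Real.Lp_add_le s f g one_le_two

lemma l2_le_of_abs_le_add {x y z : ℕ →₀ ℝ} {a b : ℝ} (ha : 0 ≤ a) (hb : 0 ≤ b)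
    (h : ∀ n, |z n| ≤ a * |x n| + b * |y n|) : l2 z ≤ a * l2 x + b * l2 y := by
  set s := z.support ∪ (x.support ∪ y.support)
  have hx : x.support ⊆ s := Finset.subset_union_left.trans Finset.subset_union_right
  have hy : y.support ⊆ s := Finset.subset_union_right.trans Finset.subset_union_right
  calc l2 z = √(∑ n ∈ s, z n ^ 2) := l2_eq_sqrt_sum z Finset.subset_union_left
    _ ≤ √(∑ n ∈ s, (a * |x n| + b * |y n|) ^ 2) := by
      refine Real.sqrt_le_sqrt (Finset.sum_le_sum fun n _ => ?_)
      exact sq_le_sq.2 ((h n).trans (le_abs_self _))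
    _ ≤ √(∑ n ∈ s, (a * |x n|) ^ 2) + √(∑ n ∈ s, (b * |y n|) ^ 2) := sqrt_sum_sq_add_le _ _ _
    _ = a * l2 x + b * l2 y := by
      simp only [mul_pow, sq_abs, ← Finset.mul_sum, Real.sqrt_mul (sq_nonneg _),
        Real.sqrt_sq ha, Real.sqrt_sq hb, l2_eq_sqrt_sum x hx, l2_eq_sqrt_sum y hy]

lemma l2_le_of_abs_le_mul {x z : ℕ →₀ ℝ} {a : ℝ} (ha : 0 ≤ a) (h : ∀ n, |z n| ≤ a * |x n|) :
    l2 z ≤ a * l2 x := by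
  simpa using l2_le_of_abs_le_add (y := x) ha le_rfl (by simpa using h)

lemma l2_add_le (x y : ℕ →₀ ℝ) : l2 (x + y) ≤ l2 x + l2 y := by
  simpa using l2_le_of_abs_le_add zero_le_one zero_le_one fun n => by
    simpa using abs_add_le (x n) (y n)

lemma l2_sub_le (x y : ℕ →₀ ℝ) : l2 (x - y) ≤ l2 x + l2 y := by
  simpa using l2_le_of_abs_le_add zero_le_one zero_le_one fun n => by
    simpa using abs_sub (x n) (y n)

lemma l2_smul (c : ℝ) (x : ℕ →₀ ℝ) : l2 (c • x) = |c| * l2 x := by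
  rw [l2_eq_sqrt_sum (c • x) Finsupp.support_smul, l2]
  simp only [Finsupp.smul_apply, smul_eq_mul, mul_pow, ← Finset.mul_sum,
    Real.sqrt_mul (sq_nonneg c), Real.sqrt_sq_eq_abs]

lemma mul_log_div_le_sub {s t : ℝ} (hs : 0 ≤ s) (hst : s ≤ t) : s * log (t / s) ≤ t - s := by
  rcases hs.eq_or_lt with rfl | hs
  · simpa using hst
  have := mul_le_mul_of_nonneg_left
    (Real.log_le_sub_one_of_pos (div_pos (hs.trans_le hst) hs)) hs.le
  rwa [mul_sub, mul_div_cancel₀ t hs.ne', mul_one] at this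

section Profile

variable {φ : ℝ → ℝ} {K : ℝ≥0}

lemma LipschitzOnWith.abs_comp_log_sub_le (hφ : LipschitzOnWith K φ (Set.Ici 0)) {α β : ℝ}
    (hα : 1 ≤ α) (hβ : 1 ≤ β) : |φ (log α) - φ (log β)| ≤ K * |log (α / β)| := by
  rw [Real.log_div (by positivity) (by positivity), ← Real.dist_eq, ← Real.dist_eq]
  exact hφ.dist_le_mul _ (Set.mem_Ici.2 (Real.log_nonneg hα)) _ (Set.mem_Ici.2 (Real.log_nonneg hβ))

variable (φ) in
noncomputable def omegaProfile (r t : ℝ) : ℝ := t * φ (log (r / |t|))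

lemma omegaProfile_zero (r : ℝ) : omegaProfile φ r 0 = 0 := zero_mul _

lemma omegaProfile_neg (r t : ℝ) : omegaProfile φ r (-t) = -omegaProfile φ r t := by
  simp only [omegaProfile, abs_neg, neg_mul]

lemma mul_abs_comp_log_div_sub_le (hφ : LipschitzOnWith K φ (Set.Ici 0)) {s t r : ℝ}
    (hs : 0 < s) (hst : s ≤ t) (htr : t ≤ r) :
    s * |φ (log (r / s)) - φ (log (r / t))| ≤ K * (t - s) := by
  have ht : 0 < t := hs.trans_le hst
  have hratio : r / s / (r / t) = t / s := by field_simp [(ht.trans_le htr).ne']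
  calc s * |φ (log (r / s)) - φ (log (r / t))|
      ≤ s * (K * log (t / s)) := by
        gcongr
        have := hφ.abs_comp_log_sub_le ((one_le_div hs).2 (hst.trans htr)) ((one_le_div ht).2 htr)
        rwa [hratio, abs_of_nonneg (Real.log_nonneg ((one_le_div hs).2 hst))] at this
    _ = K * (s * log (t / s)) := by ring
    _ ≤ K * (t - s) := by gcongr; exact mul_log_div_le_sub hs.le hst

lemma abs_omegaProfile_add_sub_le_of_nonneg (hφ : LipschitzOnWith K φ (Set.Ici 0)) {r a b : ℝ}
    (ha : 0 ≤ a) (hb : 0 ≤ b) (hr : a + b ≤ r) :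
    |omegaProfile φ r (a + b) - omegaProfile φ r a - omegaProfile φ r b| ≤ K * (a + b) := by
  rcases ha.eq_or_lt with rfl | ha
  · simp only [omegaProfile_zero, zero_add, sub_zero, sub_self, abs_zero]
    positivity
  rcases hb.eq_or_lt with rfl | hb
  · simp only [omegaProfile_zero, add_zero, sub_self, abs_zero]
    positivity
  set h : ℝ → ℝ := fun t => φ (log (r / t))
  have hsplit : omegaProfile φ r (a + b) - omegaProfile φ r a - omegaProfile φ r b
      = a * (h (a + b) - h a) + b * (h (a + b) - h b) := by
    simp only [omegaProfile, h, abs_of_pos ha, abs_of_pos hb, abs_of_pos (add_pos ha hb)]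
    ring
  calc |omegaProfile φ r (a + b) - omegaProfile φ r a - omegaProfile φ r b|
      ≤ a * |h a - h (a + b)| + b * |h b - h (a + b)| := by
        rw [hsplit, abs_sub_comm (h a), abs_sub_comm (h b)]
        refine (abs_add_le _ _).trans_eq ?_
        rw [abs_mul, abs_mul, abs_of_pos ha, abs_of_pos hb]
    _ ≤ K * (a + b - a) + K * (a + b - b) :=
        add_le_add (mul_abs_comp_log_div_sub_le hφ ha (by linarith) hr)
          (mul_abs_comp_log_div_sub_le hφ hb (by linarith) hr)
    _ = K * (a + b) := by ring

lemma abs_omegaProfile_add_sub_le (hφ : LipschitzOnWith K φ (Set.Ici 0)) {r a b : ℝ}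
    (ha : |a| ≤ r) (hb : |b| ≤ r) (hab : |a + b| ≤ r) :
    |omegaProfile φ r (a + b) - omegaProfile φ r a - omegaProfile φ r b| ≤ K * (|a| + |b|) := by
  -- The defect `D(a, b)` satisfies `D(-a, -b) = -D(a, b)`, `D(a + b, -b) = -D(a, b)` and
  -- `D(-(a + b), a) = D(a, b)`; these bring every sign pattern to `a, b ≥ 0`.
  have hg := omegaProfile_neg (φ := φ) r
  wlog ha0 : 0 ≤ a generalizing a b
  · have := this (a := -a) (b := -b) (by rwa [abs_neg]) (by rwa [abs_neg])
      (by rwa [← neg_add, abs_neg]) (by linarith)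
    have hodd : omegaProfile φ r (-a + -b) - omegaProfile φ r (-a) - omegaProfile φ r (-b)
        = -(omegaProfile φ r (a + b) - omegaProfile φ r a - omegaProfile φ r b) := by
      rw [← neg_add, hg, hg, hg]; ring
    rwa [hodd, abs_neg, abs_neg, abs_neg] at this
  rcases le_total 0 b with hb0 | hb0
  · calc _ ≤ K * (a + b) := abs_omegaProfile_add_sub_le_of_nonneg hφ ha0 hb0 (le_of_abs_le hab)
      _ = K * (|a| + |b|) := by rw [abs_of_nonneg ha0, abs_of_nonneg hb0]
  rcases le_total 0 (a + b) with hab0 | hab0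
  · have hsymm :
        omegaProfile φ r (a + b + -b) - omegaProfile φ r (a + b) - omegaProfile φ r (-b)
          = -(omegaProfile φ r (a + b) - omegaProfile φ r a - omegaProfile φ r b) := by
      rw [add_neg_cancel_right, hg]; ring
    calc _ = |omegaProfile φ r (a + b + -b) - omegaProfile φ r (a + b)
              - omegaProfile φ r (-b)| := by rw [hsymm, abs_neg]
      _ ≤ K * (a + b + -b) := abs_omegaProfile_add_sub_le_of_nonneg hφ hab0 (neg_nonneg.2 hb0)
          (by linarith [le_abs_self a])
      _ ≤ K * (|a| + |b|) :=
          mul_le_mul_of_nonneg_left (by linarith [le_abs_self a, neg_le_abs b]) K.2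
  · have hsymm :
        omegaProfile φ r (-(a + b) + a) - omegaProfile φ r (-(a + b)) - omegaProfile φ r a
          = omegaProfile φ r (a + b) - omegaProfile φ r a - omegaProfile φ r b := by
      rw [show -(a + b) + a = -b by ring, hg, hg]; ring
    calc _ = |omegaProfile φ r (-(a + b) + a) - omegaProfile φ r (-(a + b))
              - omegaProfile φ r a| := by rw [hsymm]
      _ ≤ K * (-(a + b) + a) := abs_omegaProfile_add_sub_le_of_nonneg hφ (neg_nonneg.2 hab0) ha0
          (by linarith [neg_le_abs b])
      _ ≤ K * (|a| + |b|) :=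
          mul_le_mul_of_nonneg_left (by linarith [neg_le_abs b, abs_nonneg a]) K.2

lemma abs_omegaProfile_sub_omegaProfile_le (hφ : LipschitzOnWith K φ (Set.Ici 0)) {ρ r t : ℝ}
    (ht : |t| ≤ ρ) (hρr : ρ ≤ r) :
    |omegaProfile φ ρ t - omegaProfile φ r t| ≤ K * log (r / ρ) * |t| := by
  rcases (abs_nonneg t).eq_or_lt with h0 | ht0
  · obtain rfl : t = 0 := abs_eq_zero.1 h0.symm
    simp [omegaProfile_zero]
  have hρ : 0 < ρ := ht0.trans_le ht
  have hratio : r / |t| / (ρ / |t|) = r / ρ := by field_simp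
  have := hφ.abs_comp_log_sub_le ((one_le_div ht0).2 (ht.trans hρr)) ((one_le_div ht0).2 ht)
  rw [hratio, abs_of_nonneg (Real.log_nonneg ((one_le_div hρ).2 hρr)), abs_sub_comm] at this
  calc |omegaProfile φ ρ t - omegaProfile φ r t|
      = |t| * |φ (log (ρ / |t|)) - φ (log (r / |t|))| := by
        rw [omegaProfile, omegaProfile, ← mul_sub, abs_mul]
    _ ≤ |t| * (K * log (r / ρ)) := by gcongr
    _ = K * log (r / ρ) * |t| := by ring

end Profile

noncomputable def OmegaAtRadius (φ : ℝ → ℝ) (r : ℝ) (x : ℕ →₀ ℝ) : ℕ →₀ ℝ :=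
  x.mapRange (omegaProfile φ r) (omegaProfile_zero r)

lemma Omega_eq_OmegaAtRadius (φ : ℝ → ℝ) (x : ℕ →₀ ℝ) :
    Omega φ x = OmegaAtRadius φ (l2 x) x := by
  ext n
  rfl

lemma Omega_smul (φ : ℝ → ℝ) (c : ℝ) (x : ℕ →₀ ℝ) : Omega φ (c • x) = c • Omega φ x := by
  rcases eq_or_ne c 0 with rfl | hc
  · ext n
    simp [Omega_eq_OmegaAtRadius, OmegaAtRadius]
  ext n
  simp only [Omega_eq_OmegaAtRadius, OmegaAtRadius, Finsupp.mapRange_apply, Finsupp.smul_apply,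
    smul_eq_mul, omegaProfile, l2_smul, abs_mul, mul_div_mul_left _ _ (abs_ne_zero.2 hc)]
  ring

section Quasilinear

variable {φ : ℝ → ℝ} {K : ℝ≥0}

lemma l2_Omega_sub_OmegaAtRadius_le (hφ : LipschitzOnWith K φ (Set.Ici 0)) {w : ℕ →₀ ℝ} {r : ℝ}
    (hw : l2 w ≤ r) : l2 (Omega φ w - OmegaAtRadius φ r w) ≤ K * r := by
  have hlog : 0 ≤ log (r / l2 w) := by
    rcases (l2_nonneg w).eq_or_lt with h | h
    · simp [← h]
    · exact Real.log_nonneg ((one_le_div h).2 hw)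
  rw [Omega_eq_OmegaAtRadius]
  calc l2 (OmegaAtRadius φ (l2 w) w - OmegaAtRadius φ r w)
      ≤ K * log (r / l2 w) * l2 w := l2_le_of_abs_le_mul (by positivity) fun n =>
        abs_omegaProfile_sub_omegaProfile_le hφ (abs_apply_le_l2 w n) hw
    _ = K * (l2 w * log (r / l2 w)) := by ring
    _ ≤ K * (r - l2 w) := by gcongr; exact mul_log_div_le_sub (l2_nonneg w) hw
    _ ≤ K * r := by gcongr; linarith [l2_nonneg w]

lemma l2_OmegaAtRadius_add_sub_le (hφ : LipschitzOnWith K φ (Set.Ici 0)) {x y : ℕ →₀ ℝ} {r : ℝ}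
    (hr : l2 x + l2 y ≤ r) :
    l2 (OmegaAtRadius φ r (x + y) - OmegaAtRadius φ r x - OmegaAtRadius φ r y)
      ≤ K * (l2 x + l2 y) := by
  rw [mul_add]
  refine l2_le_of_abs_le_add K.2 K.2 fun n => ?_
  have hx := abs_apply_le_l2 x n
  have hy := abs_apply_le_l2 y n
  rw [← mul_add]
  exact abs_omegaProfile_add_sub_le hφ (by linarith [l2_nonneg y]) (by linarith [l2_nonneg x])
    (by linarith [abs_add_le (x n) (y n)])

theorem l2_Omega_add_sub_le (hφ : LipschitzOnWith K φ (Set.Ici 0)) (x y : ℕ →₀ ℝ) :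
    l2 (Omega φ (x + y) - Omega φ x - Omega φ y) ≤ 4 * K * (l2 x + l2 y) := by
  set r := l2 x + l2 y
  set Ωr := OmegaAtRadius φ r
  have hsplit : Omega φ (x + y) - Omega φ x - Omega φ y
      = (Omega φ (x + y) - Ωr (x + y)) + (Ωr (x + y) - Ωr x - Ωr y)
        - (Omega φ x - Ωr x) - (Omega φ y - Ωr y) := by abel
  have h₁ : l2 (Omega φ (x + y) - Ωr (x + y)) ≤ K * r :=
    l2_Omega_sub_OmegaAtRadius_le hφ (l2_add_le x y)
  have h₂ : l2 (Ωr (x + y) - Ωr x - Ωr y) ≤ K * r := l2_OmegaAtRadius_add_sub_le hφ le_rfl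
  have h₃ : l2 (Omega φ x - Ωr x) ≤ K * r :=
    l2_Omega_sub_OmegaAtRadius_le hφ (by linarith [l2_nonneg y])
  have h₄ : l2 (Omega φ y - Ωr y) ≤ K * r :=
    l2_Omega_sub_OmegaAtRadius_le hφ (by linarith [l2_nonneg x])
  rw [hsplit]
  refine (l2_sub_le _ _).trans ((add_le_add (l2_sub_le _ _) h₄).trans ?_)
  linarith [l2_add_le (Omega φ (x + y) - Ωr (x + y)) (Ωr (x + y) - Ωr x - Ωr y)]

end Quasilinear

theorem stmt6_general (φ : ℝ → ℝ) (L : ℝ) (hL : 0 ≤ L)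
    (hLip : ∀ s ∈ Set.Ici (0:ℝ), ∀ t ∈ Set.Ici (0:ℝ), |φ s - φ t| ≤ L * |s - t|) :
    (∀ (c : ℝ) (x : ℕ →₀ ℝ), Omega φ (c • x) = c • Omega φ x) ∧
    ∃ C : ℝ, 0 < C ∧ ∀ x y : ℕ →₀ ℝ,
      l2 (Omega φ (x + y) - Omega φ x - Omega φ y) ≤ C * (l2 x + l2 y) := by
  have hφ : LipschitzOnWith ⟨L, hL⟩ φ (Set.Ici 0) :=
    LipschitzOnWith.of_dist_le_mul fun s hs t ht => by
      rw [Real.dist_eq, Real.dist_eq]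
      exact hLip s hs t ht
  refine ⟨Omega_smul φ, 4 * L + 1, by positivity, fun x y => ?_⟩
  calc l2 (Omega φ (x + y) - Omega φ x - Omega φ y) ≤ 4 * L * (l2 x + l2 y) :=
        l2_Omega_add_sub_le hφ x y
    _ ≤ (4 * L + 1) * (l2 x + l2 y) := by
        gcongr
        · linarith [l2_nonneg x, l2_nonneg y]
        · linarith

theorem stmt6 (φ : ℝ → ℝ) (L : ℝ) (hL : 0 ≤ L) (hφ0 : φ 0 = 0)
    (hLip : ∀ s ∈ Set.Ici (0:ℝ), ∀ t ∈ Set.Ici (0:ℝ), |φ s - φ t| ≤ L * |s - t|) :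
    (∀ (c : ℝ) (x : ℕ →₀ ℝ), Omega φ (c • x) = c • Omega φ x) ∧
    ∃ C : ℝ, 0 < C ∧ ∀ x y : ℕ →₀ ℝ,
      l2 (Omega φ (x + y) - Omega φ x - Omega φ y) ≤ C * (l2 x + l2 y) :=
  stmt6_general φ L hL hLip
end

section
/- Let λ₁,…,λₙ, μ₁,…,μₘ > 0 with Σλᵢ = Σμⱼ, and let β₁',…,βₙ', γ₁',…,γₘ' be distinct positive reals such that the underlying β's and γ's come from a ℚ-linearly independent set (so all of β₁'/ (2π log 2),…,γₘ'/(2π log 2) are ℚ-linearly independent). If the two sequences of pairs {(λᵢ, βᵢ')} and {(μⱼ, γⱼ')} are not identical, then limsup_{t→∞} |Σᵢ λᵢ sin(βᵢ' t) − Σⱼ μⱼ sin(γⱼ' t)| > 0. -/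
open Real

open Real Filter MeasureTheory intervalIntegral Topology

lemma aux_int_cos (c : ℝ) (hc : c ≠ 0) (T : ℝ) :
    ∫ t in (0:ℝ)..T, Real.cos (c * t) = Real.sin (c * T) / c := by
  rw [intervalIntegral.integral_comp_mul_left Real.cos hc]
  simp [integral_cos, smul_eq_mul, div_eq_inv_mul]

lemma aux_sin_mul_sin (x y : ℝ) :
    Real.sin x * Real.sin y = (Real.cos (x - y) - Real.cos (x + y)) / 2 := by
  rw [Real.cos_sub, Real.cos_add]; ring

lemma aux_I_ne (a b : ℝ) (hab : a - b ≠ 0) (hab' : a + b ≠ 0) (T : ℝ) :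
    ∫ t in (0:ℝ)..T, Real.sin (a*t) * Real.sin (b*t)
      = (Real.sin ((a-b)*T) / (a-b) - Real.sin ((a+b)*T) / (a+b)) / 2 := by
  have h1 : ∀ t : ℝ, Real.sin (a*t) * Real.sin (b*t)
      = (Real.cos ((a-b)*t) - Real.cos ((a+b)*t)) / 2 := by
    intro t
    rw [aux_sin_mul_sin, show a*t - b*t = (a-b)*t by ring, show a*t + b*t = (a+b)*t by ring]
  rw [intervalIntegral.integral_congr (g := fun t => (Real.cos ((a-b)*t) - Real.cos ((a+b)*t)) / 2)
      (fun t _ => h1 t)]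
  rw [intervalIntegral.integral_div]
  rw [intervalIntegral.integral_sub
      ((by fun_prop : Continuous fun t : ℝ => Real.cos ((a-b)*t)).intervalIntegrable _ _)
      ((by fun_prop : Continuous fun t : ℝ => Real.cos ((a+b)*t)).intervalIntegrable _ _)]
  rw [aux_int_cos _ hab, aux_int_cos _ hab']

lemma aux_I_eq (a : ℝ) (ha : a ≠ 0) (T : ℝ) :
    ∫ t in (0:ℝ)..T, Real.sin (a*t) * Real.sin (a*t)
      = T/2 - Real.sin (2*a*T) / (4*a) := by
  have h1 : ∀ t : ℝ, Real.sin (a*t) * Real.sin (a*t)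
      = (1 - Real.cos ((2*a)*t)) / 2 := by
    intro t
    rw [aux_sin_mul_sin, show a*t - a*t = 0 by ring, Real.cos_zero,
      show a*t + a*t = (2*a)*t by ring]
  rw [intervalIntegral.integral_congr (g := fun t => (1 - Real.cos ((2*a)*t)) / 2)
      (fun t _ => h1 t)]
  rw [intervalIntegral.integral_div]
  rw [intervalIntegral.integral_sub (intervalIntegrable_const)
      ((by fun_prop : Continuous fun t : ℝ => Real.cos ((2*a)*t)).intervalIntegrable _ _)]
  rw [aux_int_cos _ (by simpa using ha)]
  simp only [intervalIntegral.integral_const, smul_eq_mul, sub_zero, mul_one]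
  have h2 : (2:ℝ)*a ≠ 0 := by simpa using ha
  field_simp
  ring

lemma aux_bdd_div (g : ℝ → ℝ) (M : ℝ) (hM : ∀ T, |g T| ≤ M) :
    Tendsto (fun T => g T / T) atTop (𝓝 0) := by
  have h1 : Tendsto (fun T : ℝ => M * |T|⁻¹) atTop (𝓝 (M * 0)) :=
    Tendsto.const_mul M (tendsto_inv_atTop_zero.comp (tendsto_abs_atTop_atTop))
  rw [mul_zero] at h1
  apply squeeze_zero_norm _ h1
  intro T
  rw [Real.norm_eq_abs, abs_div, div_eq_mul_inv]
  exact mul_le_mul_of_nonneg_right (hM T) (inv_nonneg.2 (abs_nonneg _))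

lemma aux_tendsto_J (ω ω₀ : ℝ) (hω : 0 < ω) (hω₀ : 0 < ω₀) :
    Tendsto (fun T => (∫ t in (0:ℝ)..T, Real.sin (ω*t) * Real.sin (ω₀*t)) / T) atTop
      (𝓝 (if ω = ω₀ then 1/2 else 0)) := by
  by_cases h : ω = ω₀
  · subst h
    simp only [if_pos rfl]
    have h2 : Tendsto (fun T : ℝ => 1/2 - (Real.sin (2*ω*T) / (4*ω)) / T) atTop
        (𝓝 (1/2 - 0)) := by
      apply Tendsto.const_sub
      apply aux_bdd_div _ (1/(4*ω))
      intro T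
      rw [abs_div, abs_of_pos (by positivity : (0:ℝ) < 4*ω)]
      gcongr
      exact Real.abs_sin_le_one _
    rw [sub_zero] at h2
    apply h2.congr'
    filter_upwards [eventually_gt_atTop (0:ℝ)] with T hT
    rw [aux_I_eq ω hω.ne' T, sub_div]
    congr 1
    field_simp
  · simp only [if_neg h]
    have hd : ω - ω₀ ≠ 0 := sub_ne_zero.2 h
    have hs : ω + ω₀ ≠ 0 := by positivity
    have := aux_bdd_div
      (fun T => (Real.sin ((ω-ω₀)*T) / (ω-ω₀) - Real.sin ((ω+ω₀)*T) / (ω+ω₀)) / 2)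
      ((1/|ω-ω₀| + 1/|ω+ω₀|)/2) ?_
    · apply this.congr
      intro T
      rw [aux_I_ne ω ω₀ hd hs T]
    · intro T
      rw [abs_div, abs_two]
      gcongr ?_ / 2
      calc |Real.sin ((ω-ω₀)*T) / (ω-ω₀) - Real.sin ((ω+ω₀)*T) / (ω+ω₀)|
          ≤ |Real.sin ((ω-ω₀)*T) / (ω-ω₀)| + |Real.sin ((ω+ω₀)*T) / (ω+ω₀)| := abs_sub _ _
        _ ≤ 1/|ω-ω₀| + 1/|ω+ω₀| := by
            rw [abs_div, abs_div]
            gcongr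
            · exact Real.abs_sin_le_one _
            · exact Real.abs_sin_le_one _

lemma aux_cesaro_integral (g : ℝ → ℝ) (hg : Continuous g)
    (h0 : Tendsto g atTop (𝓝 0)) :
    Tendsto (fun T => (∫ t in (0:ℝ)..T, g t) / T) atTop (𝓝 0) := by
  rw [Metric.tendsto_atTop]
  intro ε hε
  obtain ⟨A₀, hA₀⟩ := (Metric.tendsto_atTop.1 h0) (ε/4) (by positivity)
  set A := max A₀ 0 with hAdef
  have hA : ∀ t ≥ A, |g t| ≤ ε/4 := by
    intro t ht
    have := hA₀ t (le_trans (le_max_left _ _) ht)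
    rw [Real.dist_eq, sub_zero] at this
    exact this.le
  set C := |∫ t in (0:ℝ)..A, g t| with hC
  refine ⟨max (max A 1) (4*C/ε + 1), fun T hT => ?_⟩
  have hTA : A ≤ T := le_trans (le_trans (le_max_left _ _) (le_max_left _ _)) hT
  have hT1 : (1:ℝ) ≤ T := le_trans (le_trans (le_max_right _ _) (le_max_left _ _)) hT
  have hT0 : (0:ℝ) < T := lt_of_lt_of_le one_pos hT1
  have hTC : 4*C/ε + 1 ≤ T := le_trans (le_max_right _ _) hT
  have hsplit : (∫ t in (0:ℝ)..T, g t) = (∫ t in (0:ℝ)..A, g t) + ∫ t in A..T, g t :=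
    (intervalIntegral.integral_add_adjacent_intervals
      (hg.intervalIntegrable _ _) (hg.intervalIntegrable _ _)).symm
  have htail : |∫ t in A..T, g t| ≤ ε/4 * |T - A| := by
    rw [← Real.norm_eq_abs]
    apply intervalIntegral.norm_integral_le_of_norm_le_const
    intro x hx
    rw [Set.uIoc_of_le hTA] at hx
    rw [Real.norm_eq_abs]
    exact hA x hx.1.le
  have hCnn : 0 ≤ C := abs_nonneg _
  rw [Real.dist_eq, sub_zero, abs_div, abs_of_pos hT0]
  rw [div_lt_iff₀ hT0]
  calc |∫ t in (0:ℝ)..T, g t| ≤ C + ε/4 * |T - A| := by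
        rw [hsplit]; exact (abs_add_le _ _).trans (add_le_add le_rfl htail)
    _ ≤ C + ε/4 * T := by
        gcongr
        rw [abs_of_nonneg (sub_nonneg.2 hTA)]
        have : 0 ≤ A := le_max_right _ _
        linarith
    _ < ε * T := by
        have h4 : 4*C/ε < T := lt_of_lt_of_le (lt_add_one _) hTC
        rw [div_lt_iff₀ hε] at h4
        nlinarith

theorem stmt15 (n m : ℕ) (lam : Fin n → ℝ) (mu : Fin m → ℝ)
    (hlam : ∀ i, 0 < lam i) (hmu : ∀ j, 0 < mu j)
    (hsum : ∑ i, lam i = ∑ j, mu j)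
    (βf : Fin n → ℝ) (γf : Fin m → ℝ)
    (hβpos : ∀ i, 0 < βf i) (hγpos : ∀ j, 0 < γf j)
    (hβinj : Function.Injective βf) (hγinj : Function.Injective γf)
    (S : Set ℝ) (hS : LinearIndependent ℚ ((↑) : S → ℝ))
    (hmemβ : ∀ i, βf i / (2 * π * Real.log 2) ∈ S)
    (hmemγ : ∀ j, γf j / (2 * π * Real.log 2) ∈ S)
    (hne : ¬ ∃ e : Fin n ≃ Fin m, ∀ i, lam i = mu (e i) ∧ βf i = γf (e i)) :
    0 < Filter.limsup (fun t : ℝ =>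
      |∑ i, lam i * Real.sin (βf i * t) - ∑ j, mu j * Real.sin (γf j * t)|)
      Filter.atTop := by
  set f : ℝ → ℝ := fun t => ∑ i, lam i * Real.sin (βf i * t) - ∑ j, mu j * Real.sin (γf j * t)
    with hfdef
  have hfc : Continuous f := by
    apply Continuous.sub <;> exact continuous_finset_sum _ (fun i _ => by fun_prop)
  by_contra hcon
  push_neg at hcon
  -- |f| tends to 0
  have hbd : Filter.IsBoundedUnder (· ≤ ·) Filter.atTop (fun t => |f t|) := by
    apply Filter.isBoundedUnder_of
    refine ⟨(∑ i, lam i) + ∑ j, mu j, fun t => ?_⟩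
    calc |f t| ≤ |∑ i, lam i * Real.sin (βf i * t)| + |∑ j, mu j * Real.sin (γf j * t)| :=
          abs_sub _ _
      _ ≤ (∑ i, lam i) + ∑ j, mu j := by
          apply add_le_add <;>
          · refine (Finset.abs_sum_le_sum_abs _ _).trans (Finset.sum_le_sum fun i _ => ?_)
            rw [abs_mul, abs_of_pos (by first | exact hlam i | exact hmu i)]
            exact mul_le_of_le_one_right (by first | exact (hlam i).le | exact (hmu i).le)
              (Real.abs_sin_le_one _)
  have habs : Tendsto (fun t => |f t|) atTop (𝓝 0) := by
    rw [Metric.tendsto_nhds]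
    intro ε hε
    have h1 : Filter.limsup (fun t => |f t|) Filter.atTop < ε := lt_of_le_of_lt hcon hε
    filter_upwards [Filter.eventually_lt_of_limsup_lt h1 hbd] with t ht
    rw [Real.dist_eq, sub_zero, abs_abs]
    exact ht
  -- find frequency with nonzero coefficient
  have key : ∃ ω₀ : ℝ, 0 < ω₀ ∧
      (∑ i, lam i * (if βf i = ω₀ then (1:ℝ)/2 else 0))
        - (∑ j, mu j * (if γf j = ω₀ then (1:ℝ)/2 else 0)) ≠ 0 := by
    have sumβ_at : ∀ i₀ : Fin n,
        ∑ i, lam i * (if βf i = βf i₀ then (1:ℝ)/2 else 0) = lam i₀ / 2 := by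
      intro i₀
      rw [Finset.sum_eq_single i₀]
      · rw [if_pos rfl]; ring
      · intro i _ hi
        rw [if_neg (fun h => hi (hβinj h)), mul_zero]
      · intro h; exact absurd (Finset.mem_univ i₀) h
    have sumγ_at : ∀ j₀ : Fin m,
        ∑ j, mu j * (if γf j = γf j₀ then (1:ℝ)/2 else 0) = mu j₀ / 2 := by
      intro j₀
      rw [Finset.sum_eq_single j₀]
      · rw [if_pos rfl]; ring
      · intro j _ hj
        rw [if_neg (fun h => hj (hγinj h)), mul_zero]
      · intro h; exact absurd (Finset.mem_univ j₀) h
    have sumβ_none : ∀ ω₀ : ℝ, (∀ i, βf i ≠ ω₀) →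
        ∑ i, lam i * (if βf i = ω₀ then (1:ℝ)/2 else 0) = 0 :=
      fun ω₀ h => Finset.sum_eq_zero fun i _ => by rw [if_neg (h i), mul_zero]
    have sumγ_none : ∀ ω₀ : ℝ, (∀ j, γf j ≠ ω₀) →
        ∑ j, mu j * (if γf j = ω₀ then (1:ℝ)/2 else 0) = 0 :=
      fun ω₀ h => Finset.sum_eq_zero fun j _ => by rw [if_neg (h j), mul_zero]
    by_cases HA : ∀ i, ∃ j, βf i = γf j ∧ lam i = mu j
    · by_cases HB : ∀ j, ∃ i, γf j = βf i ∧ mu j = lam i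
      · exfalso
        apply hne
        choose e he1 he2 using HA
        choose e' he1' he2' using HB
        have hinj : Function.Injective e := by
          intro i1 i2 h
          apply hβinj
          rw [he1 i1, he1 i2, h]
        have hsurj : Function.Surjective e := by
          intro j
          exact ⟨e' j, hγinj (((he1 (e' j)).symm.trans (he1' j).symm))⟩
        exact ⟨Equiv.ofBijective e ⟨hinj, hsurj⟩, fun i => ⟨he2 i, he1 i⟩⟩
      · push_neg at HB
        obtain ⟨j₀, hj₀⟩ := HB
        refine ⟨γf j₀, hγpos j₀, ?_⟩
        rw [sumγ_at j₀]
        by_cases hex : ∃ i, βf i = γf j₀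
        · obtain ⟨i₁, hi₁⟩ := hex
          rw [← hi₁, sumβ_at i₁]
          have : mu j₀ ≠ lam i₁ := hj₀ i₁ hi₁.symm
          intro hcontra
          apply this
          have := sub_eq_zero.1 hcontra
          field_simp at this
          linarith
        · push_neg at hex
          rw [sumβ_none _ hex, zero_sub, neg_ne_zero]
          have := hmu j₀
          positivity
    · push_neg at HA
      obtain ⟨i₀, hi₀⟩ := HA
      refine ⟨βf i₀, hβpos i₀, ?_⟩
      rw [sumβ_at i₀]
      by_cases hex : ∃ j, γf j = βf i₀
      · obtain ⟨j₁, hj₁⟩ := hex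
        rw [← hj₁, sumγ_at j₁]
        have : lam i₀ ≠ mu j₁ := hi₀ j₁ hj₁.symm
        intro hcontra
        apply this
        have := sub_eq_zero.1 hcontra
        field_simp at this
        linarith
      · push_neg at hex
        rw [sumγ_none _ hex, sub_zero]
        have := hlam i₀
        positivity
  obtain ⟨ω₀, hω₀, hL⟩ := key
  -- the averaged integral tends to the coefficient
  set F : ℝ → ℝ := fun T => (∫ t in (0:ℝ)..T, f t * Real.sin (ω₀*t)) / T with hFdef
  have hFsplit : ∀ T : ℝ,
      F T = (∑ i, lam i * ((∫ t in (0:ℝ)..T, Real.sin (βf i * t) * Real.sin (ω₀*t)) / T))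
          - ∑ j, mu j * ((∫ t in (0:ℝ)..T, Real.sin (γf j * t) * Real.sin (ω₀*t)) / T) := by
    intro T
    have hint : (∫ t in (0:ℝ)..T, f t * Real.sin (ω₀*t))
        = (∑ i, lam i * ∫ t in (0:ℝ)..T, Real.sin (βf i * t) * Real.sin (ω₀*t))
        - ∑ j, mu j * ∫ t in (0:ℝ)..T, Real.sin (γf j * t) * Real.sin (ω₀*t) := by
      have heq : ∀ t : ℝ, f t * Real.sin (ω₀*t)
          = (∑ i, lam i * (Real.sin (βf i * t) * Real.sin (ω₀*t)))
            - ∑ j, mu j * (Real.sin (γf j * t) * Real.sin (ω₀*t)) := by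
        intro t
        simp only [hfdef, sub_mul, Finset.sum_mul, mul_assoc]
      rw [intervalIntegral.integral_congr (fun t _ => heq t)]
      rw [intervalIntegral.integral_sub
          ((continuous_finset_sum _ (fun i _ => by fun_prop)).intervalIntegrable _ _)
          ((continuous_finset_sum _ (fun j _ => by fun_prop)).intervalIntegrable _ _),
        intervalIntegral.integral_finset_sum
          (fun i _ => (by fun_prop : Continuous fun t : ℝ =>
            lam i * (Real.sin (βf i * t) * Real.sin (ω₀*t))).intervalIntegrable _ _),
        intervalIntegral.integral_finset_sum
          (fun j _ => (by fun_prop : Continuous fun t : ℝ =>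
            mu j * (Real.sin (γf j * t) * Real.sin (ω₀*t))).intervalIntegrable _ _)]
      congr 1 <;> · apply Finset.sum_congr rfl; intro x _
                    exact intervalIntegral.integral_const_mul _ _
    rw [hFdef]
    simp only [hint, sub_div, Finset.sum_div, mul_div_assoc]
  have h1 : Tendsto F atTop (𝓝
      ((∑ i, lam i * (if βf i = ω₀ then (1:ℝ)/2 else 0))
        - (∑ j, mu j * (if γf j = ω₀ then (1:ℝ)/2 else 0)))) := by
    rw [show F = fun T => (∑ i, lam i * ((∫ t in (0:ℝ)..T, Real.sin (βf i * t) * Real.sin (ω₀*t)) / T))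
          - ∑ j, mu j * ((∫ t in (0:ℝ)..T, Real.sin (γf j * t) * Real.sin (ω₀*t)) / T)
        from funext hFsplit]
    apply Tendsto.sub
    · exact tendsto_finset_sum _ fun i _ =>
        (aux_tendsto_J (βf i) ω₀ (hβpos i) hω₀).const_mul (lam i)
    · exact tendsto_finset_sum _ fun j _ =>
        (aux_tendsto_J (γf j) ω₀ (hγpos j) hω₀).const_mul (mu j)
  have h2 : Tendsto F atTop (𝓝 0) := by
    apply aux_cesaro_integral _ (by fun_prop)
    apply squeeze_zero_norm _ habs
    intro t
    rw [Real.norm_eq_abs, abs_mul]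
    calc |f t| * |Real.sin (ω₀*t)| ≤ |f t| * 1 :=
          mul_le_mul_of_nonneg_left (Real.abs_sin_le_one _) (abs_nonneg _)
      _ = |f t| := mul_one _
  exact hL (tendsto_nhds_unique h1 h2)
end
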